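/- arXiv:2309.06215 — 5 statements merged into one kernel-verified Lean document; each statement's English description precedes it below -/
import Mathlib

section
/- Let 𝒜 be an abelian group, σ and τ types, and D : (σ →₀ 𝒜) →+ (τ →₀ 𝒜) an additive monoid homomorphism. Let z : σ →₀ 𝒜 be a cocycle (D z = 0) and let ζ be a coboundary-connected component of supp z. Then the restriction z₀ of z to ζ (i.e. z₀ agrees with z on ζ and vanishes elsewhere) satisfies D z₀ = 0, and also D (z − z₀) = 0. -/
/-- There is a coboundary chain of length `k` in `A` from `s` to `s'`:
cochains `τ₀, …, τ_k`, each supported on a single cell belonging to `A`,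
with `supp τ₀ = {s}`, `supp τ_k = {s'}`, and consecutive `D`-supports intersecting. -/
def HasCobChain {𝒜 σ τ : Type*} [AddCommGroup 𝒜] (D : (σ →₀ 𝒜) →+ (τ →₀ 𝒜))
    (A : Set σ) (k : ℕ) (s s' : σ) : Prop :=
  ∃ T : Fin (k + 1) → (σ →₀ 𝒜),
    (∀ i, ∃ x ∈ A, (T i).support = {x}) ∧
    (T 0).support = {s} ∧
    (T (Fin.last k)).support = {s'} ∧
    ∀ i : Fin k, ∃ t, t ∈ (D (T i.castSucc)).support ∧ t ∈ (D (T i.succ)).support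

/-- `s` and `s'` are coboundary connected in `A`. -/
def CobConn {𝒜 σ τ : Type*} [AddCommGroup 𝒜] (D : (σ →₀ 𝒜) →+ (τ →₀ 𝒜))
    (A : Set σ) (s s' : σ) : Prop :=
  ∃ k : ℕ, HasCobChain D A k s s'

/-- `ζ` is a coboundary-connected component of `A`: the equivalence class of some `s ∈ A`
under the relation of being coboundary connected in `A`. -/
def IsCobComponent {𝒜 σ τ : Type*} [AddCommGroup 𝒜] (D : (σ →₀ 𝒜) →+ (τ →₀ 𝒜))
    (A : Set σ) (ζ : Set σ) : Prop :=
  ∃ s ∈ A, ζ = {s' | s' ∈ A ∧ CobConn D A s s'}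


/-- Auxiliary: chains indexed by `ℕ` instead of `Fin (k+1)`. -/
def NatChain {𝒜 σ τ : Type*} [AddCommGroup 𝒜] (D : (σ →₀ 𝒜) →+ (τ →₀ 𝒜))
    (A : Set σ) (k : ℕ) (T : ℕ → (σ →₀ 𝒜)) (s s' : σ) : Prop :=
  (∀ i ≤ k, ∃ x ∈ A, (T i).support = {x}) ∧
  (T 0).support = {s} ∧ (T k).support = {s'} ∧
  ∀ i < k, ∃ t, t ∈ (D (T i)).support ∧ t ∈ (D (T (i+1))).support

lemma cobconn_iff_natChain {𝒜 σ τ : Type*} [AddCommGroup 𝒜] (D : (σ →₀ 𝒜) →+ (τ →₀ 𝒜))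
    (A : Set σ) (s s' : σ) :
    CobConn D A s s' ↔ ∃ k T, NatChain D A k T s s' := by
  constructor
  · rintro ⟨k, T, h1, h2, h3, h4⟩
    refine ⟨k, fun i => T ⟨min i k, Nat.lt_succ_of_le (Nat.min_le_right _ _)⟩, ?_, ?_, ?_, ?_⟩
    · intro i hi
      dsimp only
      have : (⟨min i k, Nat.lt_succ_of_le (Nat.min_le_right _ _)⟩ : Fin (k+1)) =
          ⟨i, Nat.lt_succ_of_le hi⟩ := by ext; simp [Nat.min_eq_left hi]
      rw [this]; exact h1 _
    · dsimp only
      have : (⟨min 0 k, Nat.lt_succ_of_le (Nat.min_le_right _ _)⟩ : Fin (k+1)) = 0 := by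
        ext; simp
      rw [this]; exact h2
    · dsimp only
      have : (⟨min k k, Nat.lt_succ_of_le (Nat.min_le_right _ _)⟩ : Fin (k+1)) = Fin.last k := by
        ext; simp
      rw [this]; exact h3
    · intro i hi
      obtain ⟨t, ht1, ht2⟩ := h4 ⟨i, hi⟩
      refine ⟨t, ?_, ?_⟩
      · dsimp only
        have : (⟨min i k, Nat.lt_succ_of_le (Nat.min_le_right _ _)⟩ : Fin (k+1)) =
            Fin.castSucc ⟨i, hi⟩ := by ext; simp [Nat.min_eq_left (Nat.le_of_lt hi)]
        rw [this]; exact ht1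
      · dsimp only
        have : (⟨min (i+1) k, Nat.lt_succ_of_le (Nat.min_le_right _ _)⟩ : Fin (k+1)) =
            Fin.succ ⟨i, hi⟩ := by ext; simp [Nat.min_eq_left hi]
        rw [this]; exact ht2
  · rintro ⟨k, T, h1, h2, h3, h4⟩
    refine ⟨k, fun i => T i.val, ?_, ?_, ?_, ?_⟩
    · intro i; exact h1 i.val (Nat.lt_succ_iff.mp i.isLt)
    · simpa using h2
    · simpa using h3
    · intro i
      obtain ⟨t, ht1, ht2⟩ := h4 i.val i.isLt
      exact ⟨t, by simpa using ht1, by simpa using ht2⟩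

lemma cobconn_extend {𝒜 σ τ : Type*} [AddCommGroup 𝒜] (D : (σ →₀ 𝒜) →+ (τ →₀ 𝒜))
    (z : σ →₀ 𝒜) {s₀ s s' : σ} {t : τ}
    (h : CobConn D (↑z.support : Set σ) s₀ s)
    (hs' : s' ∈ (↑z.support : Set σ))
    (ht1 : (D (Finsupp.single s (z s))) t ≠ 0)
    (ht2 : (D (Finsupp.single s' (z s'))) t ≠ 0) :
    CobConn D (↑z.support : Set σ) s₀ s' := by
  classical
  have hzs : z s ≠ 0 := by
    intro h0; apply ht1; simp [h0]
  have hzs' : z s' ≠ 0 := by simpa [Finsupp.mem_support_iff] using hs'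
  set P := Finsupp.single s (z s) with hP
  set Q := Finsupp.single s' (z s') with hQ
  have hPsupp : P.support = {s} := Finsupp.support_single_ne_zero _ hzs
  have hQsupp : Q.support = {s'} := Finsupp.support_single_ne_zero _ hzs'
  have hsA : s ∈ (↑z.support : Set σ) := by simp [Finsupp.mem_support_iff, hzs]
  rw [cobconn_iff_natChain] at h ⊢
  obtain ⟨k, T, hmem, h0, hk, hj⟩ := h
  match k with
  | 0 =>
    have hss : s₀ = s := by
      have := h0.symm.trans hk
      exact Finset.singleton_injective this
    refine ⟨1, fun i => if i = 0 then P else Q, ?_, ?_, ?_, ?_⟩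
    · intro i hi
      interval_cases i
      · exact ⟨s, hsA, by simpa using hPsupp⟩
      · exact ⟨s', hs', by simpa using hQsupp⟩
    · simpa [hss] using hPsupp
    · simpa using hQsupp
    · intro i hi
      interval_cases i
      exact ⟨t, by simpa [Finsupp.mem_support_iff] using ht1,
        by simpa [Finsupp.mem_support_iff] using ht2⟩
  | m + 1 =>
    obtain ⟨u, hu1, hu2⟩ := hj m (by omega)
    have hu2' : (D (T (m+1))) u ≠ 0 := Finsupp.mem_support_iff.mp hu2
    have hsingle := Finsupp.support_eq_singleton.mp hk
    have hW : ∃ W : σ →₀ 𝒜, W.support = {s} ∧ (D W) u ≠ 0 ∧ (D W) t ≠ 0 := by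
      by_cases hTt : (D (T (m+1))) t ≠ 0
      · exact ⟨T (m+1), hk, hu2', hTt⟩
      · push_neg at hTt
        by_cases hPu : (D P) u ≠ 0
        · exact ⟨P, hPsupp, hPu, ht1⟩
        · push_neg at hPu
          have hDadd : D (T (m+1) + P) = D (T (m+1)) + D P := map_add _ _ _
          have hWu : (D (T (m+1) + P)) u ≠ 0 := by
            rw [hDadd]; simpa [hPu] using hu2'
          have hWt : (D (T (m+1) + P)) t ≠ 0 := by
            rw [hDadd]; simpa [hTt] using ht1
          have hform : T (m+1) + P = Finsupp.single s (T (m+1) s + z s) := by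
            rw [Finsupp.single_add]
            rw [← hsingle.2, hP]
          have hc : T (m+1) s + z s ≠ 0 := by
            intro h0
            apply hWu
            rw [hform, h0, Finsupp.single_zero, map_zero]
            rfl
          exact ⟨T (m+1) + P, by rw [hform]; exact Finsupp.support_single_ne_zero _ hc,
            hWu, hWt⟩
    obtain ⟨W, hWs, hWu, hWt⟩ := hW
    refine ⟨m + 2, fun i => if i ≤ m then T i else if i = m + 1 then W else Q, ?_, ?_, ?_, ?_⟩
    · intro i hi
      dsimp only
      rcases Nat.lt_or_ge i (m+1) with h' | h'
      · rw [if_pos (show i ≤ m by omega)]; exact hmem i (by omega)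
      · rcases Nat.eq_or_lt_of_le h' with h'' | h''
        · rw [if_neg (show ¬ i ≤ m by omega), if_pos h''.symm]; exact ⟨s, hsA, hWs⟩
        · have hieq : i = m + 2 := by omega
          rw [if_neg (show ¬ i ≤ m by omega), if_neg (show ¬ i = m + 1 by omega)]
          exact ⟨s', hs', hQsupp⟩
    · dsimp only
      rw [if_pos (show 0 ≤ m by omega)]; exact h0
    · dsimp only
      rw [if_neg (show ¬ m + 2 ≤ m by omega), if_neg (show ¬ m + 2 = m + 1 by omega)]
      exact hQsupp
    · intro i hi
      dsimp only
      rcases Nat.lt_or_ge i m with h' | h'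
      · rw [if_pos (show i ≤ m by omega), if_pos (show i + 1 ≤ m by omega)]
        exact hj i (by omega)
      · rcases Nat.eq_or_lt_of_le h' with h'' | h''
        · rw [if_pos (show i ≤ m by omega), if_neg (show ¬ i + 1 ≤ m by omega),
            if_pos (show i + 1 = m + 1 by omega), ← h'']
          exact ⟨u, hu1, Finsupp.mem_support_iff.mpr hWu⟩
        · have hieq : i = m + 1 := by omega
          subst hieq
          rw [if_neg (show ¬ m + 1 ≤ m by omega), if_pos rfl,
            if_neg (show ¬ m + 1 + 1 ≤ m by omega), if_neg (show ¬ m + 1 + 1 = m + 1 by omega)]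
          exact ⟨t, Finsupp.mem_support_iff.mpr hWt, Finsupp.mem_support_iff.mpr ht2⟩

/-- If `z` is a cocycle and `ζ` a coboundary-connected component of `supp z`, then the
restriction `z₀` of `z` to `ζ` (agreeing with `z` on `ζ` and vanishing elsewhere) is a
cocycle, and so is `z - z₀`. -/
theorem cocycle_restrict_component {𝒜 σ τ : Type*} [AddCommGroup 𝒜]
    (D : (σ →₀ 𝒜) →+ (τ →₀ 𝒜)) (z : σ →₀ 𝒜) (hz : D z = 0) (ζ : Set σ)
    (hζ : IsCobComponent D (↑z.support : Set σ) ζ)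
    (z₀ : σ →₀ 𝒜) (hz₀ : ∀ s ∈ ζ, z₀ s = z s) (hz₀' : ∀ s ∉ ζ, z₀ s = 0) :
    D z₀ = 0 ∧ D (z - z₀) = 0 := by
  classical
  obtain ⟨s₀, hs₀, hζdef⟩ := hζ
  have hz₀supp : z₀.support = z.support.filter (· ∈ ζ) := by
    ext x
    simp only [Finsupp.mem_support_iff, Finset.mem_filter]
    constructor
    · intro hx
      have hxζ : x ∈ ζ := by
        by_contra h'
        exact hx (hz₀' x h')
      exact ⟨by rw [← hz₀ x hxζ]; exact hx, hxζ⟩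
    · rintro ⟨hx, hxζ⟩
      rw [hz₀ x hxζ]; exact hx
  have hrepr : ∀ (w : σ →₀ 𝒜) (t : τ),
      (D w) t = ∑ x ∈ w.support, (D (Finsupp.single x (w x))) t := by
    intro w t
    conv_lhs => rw [← Finsupp.sum_single w]
    rw [Finsupp.sum, map_sum, Finsupp.finset_sum_apply]
  have key : D z₀ = 0 := by
    ext t
    simp only [Finsupp.coe_zero, Pi.zero_apply]
    have hDz : ∑ x ∈ z.support, (D (Finsupp.single x (z x))) t = 0 := by
      rw [← hrepr, hz]; rfl
    rw [hrepr]
    have hterm : ∀ x ∈ z₀.support,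
        (D (Finsupp.single x (z₀ x))) t = (D (Finsupp.single x (z x))) t := by
      intro x hx
      rw [hz₀supp] at hx
      rw [hz₀ x (Finset.mem_filter.mp hx).2]
    rw [Finset.sum_congr rfl hterm]
    by_cases hex : ∃ x ∈ z₀.support, (D (Finsupp.single x (z x))) t ≠ 0
    · obtain ⟨x, hx, hxt⟩ := hex
      have hxζ : x ∈ ζ := (Finset.mem_filter.mp (by rwa [hz₀supp] at hx)).2
      have hcx : CobConn D (↑z.support : Set σ) s₀ x := by
        have := hζdef ▸ hxζ
        exact this.2
      rw [← hDz]
      refine Finset.sum_subset ?_ ?_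
      · rw [hz₀supp]; exact Finset.filter_subset _ _
      · intro y hy hy'
        by_contra hyt
        have hyζ : y ∈ ζ := by
          rw [hζdef]
          refine ⟨by simpa using hy, ?_⟩
        
          exact cobconn_extend D z hcx (by simpa using hy) hxt hyt
        exact hy' (by rw [hz₀supp]; exact Finset.mem_filter.mpr ⟨hy, hyζ⟩)
    · push_neg at hex
      exact Finset.sum_eq_zero hex
  exact ⟨key, by rw [map_sub, hz, key, sub_zero]⟩
end

section
/- Let 𝒜 be an abelian group, σ and τ types, and D : (σ →₀ 𝒜) →+ (τ →₀ 𝒜) an additive monoid homomorphism. Let c : σ →₀ 𝒜 be a cochain and z a cocycle (D z = 0). Suppose ζ is a nonempty coboundary-connected component of supp z which is disjoint from supp c. Then z' := z − z|_ζ (where z|_ζ agrees with z on ζ and vanishes elsewhere) is a cocycle, i.e. D z' = 0, and the Hamming distance satisfies d(c, z') < d(c, z). -/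
private lemma exists_both_ne_zero {𝒜 σ τ : Type*} [AddCommGroup 𝒜]
    (D : (σ →₀ 𝒜) →+ (τ →₀ 𝒜)) (s : σ) {t t' : τ} {a b : 𝒜}
    (ha : D (Finsupp.single s a) t ≠ 0) (hb : D (Finsupp.single s b) t' ≠ 0) :
    ∃ c : 𝒜, D (Finsupp.single s c) t ≠ 0 ∧ D (Finsupp.single s c) t' ≠ 0 := by
  by_cases h1 : D (Finsupp.single s a) t' ≠ 0
  · exact ⟨a, ha, h1⟩
  by_cases h2 : D (Finsupp.single s b) t ≠ 0
  · exact ⟨b, h2, hb⟩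
  push_neg at h1 h2
  refine ⟨a + b, ?_, ?_⟩
  · rw [Finsupp.single_add, map_add, Finsupp.add_apply, h2, add_zero]
    exact ha
  · rw [Finsupp.single_add, map_add, Finsupp.add_apply, h1, zero_add]
    exact hb

private lemma cobConn_extend {𝒜 σ τ : Type*} [AddCommGroup 𝒜]
    (D : (σ →₀ 𝒜) →+ (τ →₀ 𝒜)) (A : Set σ) {s₀ s s' : σ}
    (h : CobConn D A s₀ s) (hsA : s ∈ A) (hs'A : s' ∈ A) {a b : 𝒜} {t : τ}
    (hta : D (Finsupp.single s a) t ≠ 0) (htb : D (Finsupp.single s' b) t ≠ 0) :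
    CobConn D A s₀ s' := by
  have hb0 : b ≠ 0 := by rintro rfl; simp at htb
  obtain ⟨k, T, hT1, hT0, hTl, hTc⟩ := h
  -- find `c` with `D (single s c) t ≠ 0` such that the updated chain is still a chain
  obtain ⟨c, hct, hchain⟩ :
      ∃ c : 𝒜, D (Finsupp.single s c) t ≠ 0 ∧
        ∀ i : Fin k, ∃ u,
          u ∈ (D (Function.update T (Fin.last k) (Finsupp.single s c) i.castSucc)).support ∧
          u ∈ (D (Function.update T (Fin.last k) (Finsupp.single s c) i.succ)).support := by
    cases k with
    | zero => exact ⟨a, hta, fun i => i.elim0⟩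
    | succ j =>
      obtain ⟨u, hu1, hu2⟩ := hTc (Fin.last j)
      have hsingle := (Finsupp.support_eq_singleton.mp hTl).2
      rw [Fin.succ_last, hsingle, Finsupp.mem_support_iff] at hu2
      obtain ⟨c, hcu, hct⟩ := exists_both_ne_zero D s hu2 hta
      refine ⟨c, hct, fun i => ?_⟩
      rcases eq_or_ne i (Fin.last j) with rfl | hi
      · refine ⟨u, ?_, ?_⟩
        · rw [Function.update_of_ne (Fin.castSucc_lt_last _).ne]
          exact hu1
        · rw [Fin.succ_last, Function.update_self]
          exact Finsupp.mem_support_iff.mpr hcu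
      · obtain ⟨u', h1, h2⟩ := hTc i
        have hi1 : i.castSucc ≠ Fin.last (j + 1) := (Fin.castSucc_lt_last _).ne
        have hi2 : i.succ ≠ Fin.last (j + 1) := by
          intro hcon
          exact hi (Fin.succ_injective _ (hcon.trans (Fin.succ_last j).symm))
        rw [Function.update_of_ne hi1, Function.update_of_ne hi2]
        exact ⟨u', h1, h2⟩
  have hc0 : c ≠ 0 := by rintro rfl; simp at hct
  set T' : Fin (k + 1) → (σ →₀ 𝒜) := Function.update T (Fin.last k) (Finsupp.single s c) with hT'
  have hT'last : T' (Fin.last k) = Finsupp.single s c := Function.update_self _ _ _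
  have hT'supp : ∀ i, ∃ x ∈ A, (T' i).support = {x} := by
    intro i
    rcases eq_or_ne i (Fin.last k) with rfl | hi
    · exact ⟨s, hsA, by rw [hT'last, Finsupp.support_single_ne_zero _ hc0]⟩
    · rw [hT', Function.update_of_ne hi]
      exact hT1 i
  have hT'0 : (T' 0).support = {s₀} := by
    rcases eq_or_ne (0 : Fin (k + 1)) (Fin.last k) with h0 | h0
    · have hs0s : s₀ = s := by
        have := hTl
        rw [← h0, hT0] at this
        exact Finset.singleton_injective this
      rw [h0, hT'last, Finsupp.support_single_ne_zero _ hc0, hs0s]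
    · rw [hT', Function.update_of_ne h0]
      exact hT0
  refine ⟨k + 1, Fin.snoc T' (Finsupp.single s' b), ?_, ?_, ?_, ?_⟩
  · intro i
    refine Fin.lastCases ?_ (fun j => ?_) i
    · rw [Fin.snoc_last]
      exact ⟨s', hs'A, Finsupp.support_single_ne_zero _ hb0⟩
    · rw [Fin.snoc_castSucc]
      exact hT'supp j
  · have : (0 : Fin (k + 2)) = Fin.castSucc 0 := rfl
    rw [this, Fin.snoc_castSucc]
    exact hT'0
  · rw [Fin.snoc_last, Finsupp.support_single_ne_zero _ hb0]
  · intro i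
    refine Fin.lastCases ?_ (fun j => ?_) i
    · refine ⟨t, ?_, ?_⟩
      · rw [Fin.snoc_castSucc, hT'last]
        exact Finsupp.mem_support_iff.mpr hct
      · rw [Fin.succ_last, Fin.snoc_last]
        exact Finsupp.mem_support_iff.mpr htb
    · obtain ⟨u, h1, h2⟩ := hchain j
      refine ⟨u, ?_, ?_⟩
      · rw [Fin.snoc_castSucc]
        exact h1
      · rw [Fin.succ_castSucc, Fin.snoc_castSucc]
        exact h2

/-- If `z` is a cocycle and `ζ` a nonempty coboundary-connected component of `supp z`
disjoint from `supp c`, then `z' = z - z|_ζ` is a cocycle strictly Hamming-closer to `c`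
than `z` is. -/
theorem closer_cocycle_of_disjoint_component {𝒜 σ τ : Type*} [AddCommGroup 𝒜]
    (D : (σ →₀ 𝒜) →+ (τ →₀ 𝒜)) (c z : σ →₀ 𝒜) (hz : D z = 0) (ζ : Set σ)
    (hζ : IsCobComponent D (↑z.support : Set σ) ζ) (hne : ζ.Nonempty)
    (hdisj : Disjoint ζ (↑c.support : Set σ))
    (z₀ : σ →₀ 𝒜) (hz₀ : ∀ s ∈ ζ, z₀ s = z s) (hz₀' : ∀ s ∉ ζ, z₀ s = 0) :
    D (z - z₀) = 0 ∧ (c - (z - z₀)).support.card < (c - z).support.card := by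
  obtain ⟨s₀, hs₀A, hζeq⟩ := hζ
  have hζsub : ∀ x ∈ ζ, x ∈ z.support := by
    intro x hx
    rw [hζeq] at hx
    exact hx.1
  -- evaluation of D via decomposition into singles
  have hdec : ∀ (f : σ →₀ 𝒜) (t : τ),
      (D f) t = ∑ x ∈ f.support, D (Finsupp.single x (f x)) t := by
    intro f t
    conv_lhs => rw [← Finsupp.sum_single f]
    rw [Finsupp.sum, map_sum, Finset.sum_apply']
  have hDz₀ : D z₀ = 0 := by
    by_contra hne0
    obtain ⟨t, ht⟩ : ∃ t, (D z₀) t ≠ 0 := by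
      by_contra hcon
      push_neg at hcon
      exact hne0 (Finsupp.ext fun t => hcon t)
    have ht' : (D (z - z₀)) t ≠ 0 := by
      rw [map_sub, Finsupp.sub_apply, hz, Finsupp.coe_zero, Pi.zero_apply, zero_sub]
      exact neg_ne_zero.mpr ht
    obtain ⟨s, hs_mem, hs_ne⟩ :=
      Finset.exists_ne_zero_of_sum_ne_zero (by rw [← hdec]; exact ht)
    obtain ⟨s', hs'_mem, hs'_ne⟩ :=
      Finset.exists_ne_zero_of_sum_ne_zero (by rw [← hdec]; exact ht')
    have hsζ : s ∈ ζ := by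
      by_contra hcon
      exact Finsupp.mem_support_iff.mp hs_mem (hz₀' s hcon)
    have hs'ζ : s' ∉ ζ := by
      intro hcon
      apply Finsupp.mem_support_iff.mp hs'_mem
      rw [Finsupp.sub_apply, hz₀ s' hcon, sub_self]
    have hs'z : s' ∈ z.support := by
      have := Finsupp.mem_support_iff.mp hs'_mem
      rw [Finsupp.sub_apply, hz₀' s' hs'ζ, sub_zero] at this
      exact Finsupp.mem_support_iff.mpr this
    have hconn : CobConn D (↑z.support : Set σ) s₀ s := by
      have := hsζ
      rw [hζeq] at this
      exact this.2
    have : CobConn D (↑z.support : Set σ) s₀ s' :=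
      cobConn_extend D _ hconn (hζsub s hsζ) hs'z hs_ne hs'_ne
    exact hs'ζ (by rw [hζeq]; exact ⟨hs'z, this⟩)
  constructor
  · rw [map_sub, hz, hDz₀, sub_zero]
  · have hcζ : ∀ x ∈ ζ, c x = 0 := by
      intro x hx
      exact Finsupp.notMem_support_iff.mp fun hmem => Set.disjoint_left.mp hdisj hx hmem
    have hsubset : (c - (z - z₀)).support ⊆ (c - z).support := by
      intro x hx
      rw [Finsupp.mem_support_iff] at hx ⊢
      by_cases hxζ : x ∈ ζ
      · exfalso
        apply hx
        rw [Finsupp.sub_apply, Finsupp.sub_apply, hcζ x hxζ, hz₀ x hxζ, sub_self, sub_zero]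
      · intro h0
        apply hx
        rw [Finsupp.sub_apply, Finsupp.sub_apply, hz₀' x hxζ, sub_zero, ← Finsupp.sub_apply, h0]
    obtain ⟨x, hxζ⟩ := hne
    apply Finset.card_lt_card
    rw [Finset.ssubset_iff_of_subset hsubset]
    refine ⟨x, ?_, ?_⟩
    · rw [Finsupp.mem_support_iff, Finsupp.sub_apply, hcζ x hxζ, zero_sub]
      exact neg_ne_zero.mpr (Finsupp.mem_support_iff.mp (hζsub x hxζ))
    · rw [Finsupp.mem_support_iff]
      push_neg
      rw [Finsupp.sub_apply, Finsupp.sub_apply, hcζ x hxζ, hz₀ x hxζ, sub_self, sub_zero]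
end

section
/- (Locality lemma.) Let 𝒜 be an abelian group, σ and τ types, and D : (σ →₀ 𝒜) →+ (τ →₀ 𝒜) an additive monoid homomorphism. Let c : σ →₀ 𝒜 be a cochain and let z be a cocycle (D z = 0) realizing the minimal Hamming distance from c to the set of cocycles, i.e. d(c, z) ≤ d(c, z') for every cocycle z'. Then every nonempty coboundary-connected component ζ of supp z satisfies ζ ∩ supp c ≠ ∅. -/
section Aux
variable {𝒜 σ τ : Type*} [AddCommGroup 𝒜]

/-- If `t` is in the support of `D f`, there's a single cell `x` of `f` whose
single-cell piece contributes at `t`. -/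
lemma exists_single_of_mem_support_map (D : (σ →₀ 𝒜) →+ (τ →₀ 𝒜)) (f : σ →₀ 𝒜) {t : τ}
    (ht : t ∈ (D f).support) :
    ∃ x ∈ f.support, t ∈ (D (Finsupp.single x (f x))).support := by
  classical
  by_contra h
  push_neg at h
  have hf : D f = ∑ x ∈ f.support, D (Finsupp.single x (f x)) := by
    conv_lhs => rw [← Finsupp.sum_single f]
    rw [Finsupp.sum, map_sum]
  rw [Finsupp.mem_support_iff] at ht
  apply ht
  rw [hf, Finset.sum_apply']
  refine Finset.sum_eq_zero fun x hx => ?_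
  have := h x hx
  rwa [Finsupp.notMem_support_iff] at this

lemma chain_of_rtg (D : (σ →₀ 𝒜) →+ (τ →₀ 𝒜)) (z : σ →₀ 𝒜) (s : σ) (hs : s ∈ z.support) :
    ∀ a, Relation.ReflTransGen (fun x y => x ∈ z.support ∧ y ∈ z.support ∧
        ∃ t, t ∈ (D (Finsupp.single x (z x))).support ∧
          t ∈ (D (Finsupp.single y (z y))).support) s a →
    ∃ k, ∃ T : Fin (k + 1) → (σ →₀ 𝒜),
      (∀ i, ∃ x ∈ (↑z.support : Set σ), (T i).support = {x}) ∧
      (T 0).support = {s} ∧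
      T (Fin.last k) = Finsupp.single a (z a) ∧
      ∀ i : Fin k, ∃ t, t ∈ (D (T i.castSucc)).support ∧ t ∈ (D (T i.succ)).support := by
  have hsupp : ∀ x, x ∈ z.support → (Finsupp.single x (z x)).support = {x} := fun x hx =>
    Finsupp.support_single_ne_zero _ (Finsupp.mem_support_iff.mp hx)
  intro a h
  induction h with
  | refl =>
    exact ⟨0, fun _ => Finsupp.single s (z s),
      fun _ => ⟨s, hs, hsupp s hs⟩, hsupp s hs, rfl, fun i => i.elim0⟩
  | @tail b c hab hbc ih =>
    obtain ⟨k, T, h1, h2, h3, h4⟩ := ih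
    obtain ⟨hbz, hcz, t, htb, htc⟩ := hbc
    refine ⟨k + 1, Fin.snoc T (Finsupp.single c (z c)), ?_, ?_, ?_, ?_⟩
    · intro i
      refine Fin.lastCases ?_ (fun j => ?_) i
      · rw [Fin.snoc_last]
        exact ⟨c, hcz, hsupp c hcz⟩
      · rw [Fin.snoc_castSucc]
        exact h1 j
    · have : ((0 : Fin (k + 1)).castSucc) = (0 : Fin (k + 2)) := rfl
      rw [← this, Fin.snoc_castSucc]
      exact h2
    · rw [Fin.snoc_last]
    · intro i
      refine Fin.lastCases ?_ (fun j => ?_) i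
      · rw [Fin.succ_last, Fin.snoc_last, Fin.snoc_castSucc, h3]
        exact ⟨t, htb, htc⟩
      · rw [Fin.succ_castSucc, Fin.snoc_castSucc, Fin.snoc_castSucc]
        exact h4 j

end Aux

/-- Locality lemma: if the cocycle `z` realizes the minimal Hamming distance from `c` to the
set of cocycles, then every nonempty coboundary-connected component of `supp z` meets
`supp c`. -/
theorem component_meets_support_of_minimal {𝒜 σ τ : Type*} [AddCommGroup 𝒜]
    (D : (σ →₀ 𝒜) →+ (τ →₀ 𝒜)) (c z : σ →₀ 𝒜) (hz : D z = 0)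
    (hmin : ∀ z' : σ →₀ 𝒜, D z' = 0 → (c - z).support.card ≤ (c - z').support.card) :
    ∀ ζ : Set σ, IsCobComponent D (↑z.support : Set σ) ζ → ζ.Nonempty →
      (ζ ∩ (↑c.support : Set σ)).Nonempty := by
  classical
  rintro ζ ⟨s, hs, rfl⟩ hne
  by_contra hempty
  rw [Set.not_nonempty_iff_eq_empty] at hempty
  have hsz : s ∈ z.support := hs
  set R : σ → σ → Prop := fun x y => x ∈ z.support ∧ y ∈ z.support ∧
      ∃ t, t ∈ (D (Finsupp.single x (z x))).support ∧
        t ∈ (D (Finsupp.single y (z y))).support with hR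
  set p : σ → Prop := fun y => Relation.ReflTransGen R s y with hp
  -- reachable cells are in ζ, hence c vanishes there
  have hc0 : ∀ a, p a → a ∈ z.support → c a = 0 := by
    intro a ha haz
    by_contra hca
    have hmem : a ∈ ({s' | s' ∈ (↑z.support : Set σ) ∧ CobConn D (↑z.support) s s'} :
        Set σ) := by
      obtain ⟨k, T, h1, h2, h3, h4⟩ := chain_of_rtg D z s hsz a ha
      refine ⟨haz, k, T, h1, h2, ?_, h4⟩
      rw [h3, Finsupp.support_single_ne_zero _ (Finsupp.mem_support_iff.mp haz)]
    have : a ∈ ({s' | s' ∈ (↑z.support : Set σ) ∧ CobConn D (↑z.support) s s'} ∩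
        (↑c.support : Set σ)) := ⟨hmem, Finsupp.mem_support_iff.mpr hca⟩
    rw [hempty] at this
    exact this
  set zU := z.filter p with hzU
  set zr := z.filter (fun y => ¬ p y) with hzr
  have hsum : zU + zr = z := Finsupp.filter_pos_add_filter_neg z p
  have hDU : D zU = 0 := by
    by_contra h
    obtain ⟨t, ht⟩ := Finsupp.support_nonempty_iff.mpr h
    have htr : t ∈ (D zr).support := by
      rw [Finsupp.mem_support_iff] at ht ⊢
      intro h0
      apply ht
      have : D zU + D zr = 0 := by rw [← map_add, hsum, hz]
      have := congrArg (fun f => f t) this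
      simpa [h0] using this
    obtain ⟨x, hx, htx⟩ := exists_single_of_mem_support_map D zU ht
    obtain ⟨y, hy, hty⟩ := exists_single_of_mem_support_map D zr htr
    rw [hzU, Finsupp.support_filter, Finset.mem_filter] at hx
    rw [hzr, Finsupp.support_filter, Finset.mem_filter] at hy
    have hxv : zU x = z x := Finsupp.filter_apply_pos _ _ hx.2
    have hyv : zr y = z y := Finsupp.filter_apply_pos _ _ hy.2
    rw [hxv] at htx
    rw [hyv] at hty
    exact hy.2 (hx.2.tail ⟨hx.1, hy.1, t, htx, hty⟩)
  have hDr : D zr = 0 := by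
    have : D zU + D zr = 0 := by rw [← map_add, hsum, hz]
    rwa [hDU, zero_add] at this
  -- strict inequality contradiction
  have hsub : (c - zr).support ⊆ (c - z).support := by
    intro a ha
    rw [Finsupp.mem_support_iff] at ha ⊢
    by_cases hpa : p a ∧ a ∈ z.support
    · exfalso
      apply ha
      rw [Finsupp.sub_apply, hc0 a hpa.1 hpa.2, hzr, Finsupp.filter_apply,
        if_neg (not_not_intro hpa.1), sub_zero]
    · have hza : zr a = z a := by
        by_cases hpa' : p a
        · have haz : a ∉ z.support := fun h => hpa ⟨hpa', h⟩
          rw [Finsupp.notMem_support_iff] at haz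
          rw [hzr, Finsupp.filter_apply, if_neg (not_not_intro hpa'), haz]
        · exact Finsupp.filter_apply_pos _ _ hpa'
      rwa [Finsupp.sub_apply, hza, ← Finsupp.sub_apply] at ha
  have hsns : s ∉ (c - zr).support := by
    rw [Finsupp.notMem_support_iff, Finsupp.sub_apply, hc0 s Relation.ReflTransGen.refl hsz,
      hzr, Finsupp.filter_apply, if_neg (not_not_intro (Relation.ReflTransGen.refl)), sub_zero]
  have hss : s ∈ (c - z).support := by
    rw [Finsupp.mem_support_iff, Finsupp.sub_apply, hc0 s Relation.ReflTransGen.refl hsz,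
      zero_sub, neg_ne_zero]
    exact Finsupp.mem_support_iff.mp hsz
  have hlt : (c - zr).support.card < (c - z).support.card :=
    Finset.card_lt_card ⟨hsub, fun h => hsns (h hss)⟩
  exact absurd (hmin zr hDr) (not_le.mpr hlt)
end

section
/- (Locality of cocycle expansion.) Let 𝒜 be an abelian group, σ and τ types, and D : (σ →₀ 𝒜) →+ (τ →₀ 𝒜) an additive monoid homomorphism. Let c : σ →₀ 𝒜 be a cochain and let z be a cocycle (D z = 0) realizing the minimal Hamming distance from c to the set of cocycles, i.e. d(c, z) ≤ d(c, z') for every cocycle z'. Then every cell s ∈ supp z lies within coboundary distance d(c, z) of supp c; that is, there exists s' ∈ supp c whose coboundary distance from s is at most d(c, z) (as an element of ℕ∞). -/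
/-- The coboundary distance between `s` and `s'`: the least `k : ℕ` (in `ℕ∞`, with value `⊤`
if no such `k` exists) such that there is a coboundary chain of length `k` from `s` to `s'`,
whose cochains are each supported on a single cell of `σ`. -/
noncomputable def cobDist {𝒜 σ τ : Type*} [AddCommGroup 𝒜] (D : (σ →₀ 𝒜) →+ (τ →₀ 𝒜))
    (s s' : σ) : ℕ∞ :=
  sInf {m : ℕ∞ | ∃ k : ℕ, m = (k : ℕ∞) ∧ HasCobChain D Set.univ k s s'}

section AuxCob

open scoped Classical

variable {𝒜 σ τ : Type*} [AddCommGroup 𝒜] (D : (σ →₀ 𝒜) →+ (τ →₀ 𝒜)) (z : σ →₀ 𝒜) (s : σ)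

/-- The set of (n+1)-cells touched by the single-cell cochain at `x` with value `z x`. -/
noncomputable def cobNbhd (x : σ) : Finset τ := (D (Finsupp.single x (z x))).support

/-- One expansion step of a ball: add all cells of `supp z` adjacent to the set. -/
noncomputable def cobStep (S : Finset σ) : Finset σ :=
  S ∪ z.support.filter (fun y => ∃ x ∈ S, ((cobNbhd D z x) ∩ (cobNbhd D z y)).Nonempty)

/-- Ball of radius `k` around `s`. -/
noncomputable def cobBall (k : ℕ) : Finset σ := (cobStep D z)^[k] {s}

lemma subset_cobStep (S : Finset σ) : S ⊆ cobStep D z S := Finset.subset_union_left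

lemma cobBall_zero : cobBall D z s 0 = {s} := rfl

lemma cobBall_succ (k : ℕ) : cobBall D z s (k + 1) = cobStep D z (cobBall D z s k) :=
  Function.iterate_succ_apply' _ _ _

lemma cobBall_mono : Monotone (cobBall D z s) := by
  apply monotone_nat_of_le_succ
  intro k
  rw [cobBall_succ]
  exact subset_cobStep _ _ _

lemma mem_cobStep {S : Finset σ} {y : σ} (hy : y ∈ cobStep D z S) :
    y ∈ S ∨ (y ∈ z.support ∧ ∃ x ∈ S, ((cobNbhd D z x) ∩ (cobNbhd D z y)).Nonempty) := by
  rcases Finset.mem_union.1 hy with h | h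
  · exact Or.inl h
  · exact Or.inr (Finset.mem_filter.1 h)

lemma mem_cobStep_of_adj {S : Finset σ} {x y : σ} (hx : x ∈ S) (hy : y ∈ z.support)
    (h : ((cobNbhd D z x) ∩ (cobNbhd D z y)).Nonempty) : y ∈ cobStep D z S :=
  Finset.mem_union.2 (Or.inr (Finset.mem_filter.2 ⟨hy, x, hx, h⟩))

lemma cobBall_subset_support (hs : s ∈ z.support) (k : ℕ) :
    cobBall D z s k ⊆ z.support := by
  induction k with
  | zero => simpa [cobBall_zero] using hs
  | succ k ih =>
      rw [cobBall_succ]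
      intro y hy
      rcases mem_cobStep D z hy with h | h
      · exact ih h
      · exact h.1

lemma cobBall_stab (r : ℕ) (h : cobBall D z s (r + 1) = cobBall D z s r) :
    ∀ j, cobBall D z s (r + j) = cobBall D z s r := by
  intro j
  induction j with
  | zero => rfl
  | succ j ih =>
      have e : r + (j + 1) = (r + j) + 1 := by ring
      rw [e, cobBall_succ, ih, ← cobBall_succ, h]

lemma cobBall_stab' (r m : ℕ) (hrm : r ≤ m) (h : cobBall D z s (r + 1) = cobBall D z s r) :
    cobBall D z s m = cobBall D z s r := by
  obtain ⟨j, rfl⟩ := Nat.exists_eq_add_of_le hrm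
  exact cobBall_stab D z s r h j

/-- Any cell in a ball is reached by a canonical path (cells in `supp z`,
adjacency via `cobNbhd`). -/
lemma cobBall_path (hs : s ∈ z.support) (k : ℕ) :
    ∀ y ∈ cobBall D z s k, ∃ j ≤ k, ∃ p : Fin (j + 1) → σ,
      (∀ i, p i ∈ z.support) ∧ p 0 = s ∧ p (Fin.last j) = y ∧
      ∀ i : Fin j, ((cobNbhd D z (p i.castSucc)) ∩ (cobNbhd D z (p i.succ))).Nonempty := by
  induction k with
  | zero =>
      intro y hy
      rw [cobBall_zero, Finset.mem_singleton] at hy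
      exact ⟨0, le_rfl, fun _ => s, fun _ => hs, rfl, hy.symm, fun i => i.elim0⟩
  | succ k ih =>
      intro y hy
      rw [cobBall_succ] at hy
      rcases mem_cobStep D z hy with h | ⟨hyA, x, hx, hadj⟩
      · obtain ⟨j, hj, hp⟩ := ih y h
        exact ⟨j, hj.trans (Nat.le_succ k), hp⟩
      · obtain ⟨j, hj, p, hpA, hp0, hpl, hadjp⟩ := ih x hx
        refine ⟨j + 1, by omega, Fin.snoc p y, ?_, ?_, ?_, ?_⟩
        · intro i
          refine Fin.lastCases ?_ (fun i' => ?_) i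
          · simpa [Fin.snoc_last] using hyA
          · simpa [Fin.snoc_castSucc] using hpA i'
        · have e : (0 : Fin (j+2)) = Fin.castSucc 0 := rfl
          rw [e, Fin.snoc_castSucc]
          exact hp0
        · simp [Fin.snoc_last]
        · intro i
          refine Fin.lastCases ?_ (fun i' => ?_) i
          · have e1 : (Fin.snoc p y : Fin (j+2) → σ) (Fin.last j).castSucc = x := by
              rw [Fin.snoc_castSucc, hpl]
            have e2 : (Fin.snoc p y : Fin (j+2) → σ) (Fin.last j).succ = y := by
              have e : (Fin.last j).succ = Fin.last (j+1) := rfl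
              rw [e, Fin.snoc_last]
            rw [e1, e2]
            exact hadj
          · have e1 : (Fin.snoc p y : Fin (j+2) → σ) i'.castSucc.castSucc = p i'.castSucc := by
              rw [Fin.snoc_castSucc]
            have e2 : (Fin.snoc p y : Fin (j+2) → σ) i'.castSucc.succ = p i'.succ := by
              rw [Fin.succ_castSucc, Fin.snoc_castSucc]
            rw [e1, e2]
            exact hadjp i'

/-- A canonical path gives a coboundary chain (with `A = Set.univ`). -/
lemma hasCobChain_of_path {j : ℕ} {y : σ} (p : Fin (j + 1) → σ)
    (hpA : ∀ i, p i ∈ z.support) (hp0 : p 0 = s) (hpl : p (Fin.last j) = y)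
    (hadj : ∀ i : Fin j, ((cobNbhd D z (p i.castSucc)) ∩ (cobNbhd D z (p i.succ))).Nonempty) :
    HasCobChain D Set.univ j s y := by
  have hsupp : ∀ i, (Finsupp.single (p i) (z (p i))).support = {p i} := fun i =>
    Finsupp.support_single_ne_zero _ (Finsupp.mem_support_iff.1 (hpA i))
  refine ⟨fun i => Finsupp.single (p i) (z (p i)), fun i => ⟨p i, Set.mem_univ _, hsupp i⟩,
    by rw [hsupp 0, hp0], by rw [hsupp (Fin.last j), hpl], fun i => ?_⟩
  obtain ⟨t, ht⟩ := hadj i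
  rw [Finset.mem_inter] at ht
  exact ⟨t, ht.1, ht.2⟩

lemma grow_card (m : ℕ) (h : ∀ r < m, cobBall D z s (r + 1) ≠ cobBall D z s r) :
    ∀ r ≤ m, r + 1 ≤ (cobBall D z s r).card := by
  intro r
  induction r with
  | zero =>
      intro _
      simp [cobBall_zero]
  | succ r ih =>
      intro hrm
      have h1 : r + 1 ≤ (cobBall D z s r).card := ih (by omega)
      have hss : cobBall D z s r ⊂ cobBall D z s (r + 1) :=
        Finset.ssubset_iff_subset_ne.2 ⟨cobBall_mono D z s (Nat.le_succ r),
          fun e => h r (by omega) e.symm⟩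
      have := Finset.card_lt_card hss
      omega

/-- The support of `D f` is contained in the union of the `D`-supports of its single pieces. -/
lemma support_D_subset (f : σ →₀ 𝒜) :
    (D f).support ⊆ f.support.biUnion (fun x => (D (Finsupp.single x (f x))).support) := by
  have e : D f = f.sum fun a b => D (Finsupp.single a b) := by
    conv_lhs => rw [← Finsupp.sum_single f]
    exact map_finsuppSum D _ _
  rw [e]
  exact Finsupp.support_sum

end AuxCob

/-- Locality of cocycle expansion: if the cocycle `z` realizes the minimal Hamming distance
from `c` to the set of cocycles, then every cell of `supp z` lies within coboundary distance
`d(c, z)` of `supp c`. -/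
theorem support_in_neighbourhood_of_minimal {𝒜 σ τ : Type*} [AddCommGroup 𝒜]
    (D : (σ →₀ 𝒜) →+ (τ →₀ 𝒜)) (c z : σ →₀ 𝒜) (hz : D z = 0)
    (hmin : ∀ z' : σ →₀ 𝒜, D z' = 0 → (c - z).support.card ≤ (c - z').support.card) :
    ∀ s ∈ z.support, ∃ s' ∈ c.support,
      cobDist D s s' ≤ ((c - z).support.card : ℕ∞) := by
  classical
  intro s hs
  set N := z.support.card with hN
  -- stabilization of the ball at radius N
  have hstab : cobBall D z s (N + 1) = cobBall D z s N := by
    by_contra hne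
    have hgrow : ∀ r < N + 1, cobBall D z s (r + 1) ≠ cobBall D z s r := by
      intro r hr heq
      exact hne ((cobBall_stab' D z s r (N + 1) (by omega) heq).trans
        (cobBall_stab' D z s r N (by omega) heq).symm)
    have h1 := grow_card D z s (N + 1) hgrow (N + 1) le_rfl
    have h2 := Finset.card_le_card (cobBall_subset_support D z s hs (N + 1))
    omega
  set ζ := cobBall D z s N with hζ
  have hsζ : s ∈ ζ := cobBall_mono D z s (Nat.zero_le N) (by simp [cobBall_zero])
  -- ζ is closed under adjacency
  have hclosed : ∀ x ∈ ζ, ∀ y ∈ z.support,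
      ((cobNbhd D z x) ∩ (cobNbhd D z y)).Nonempty → y ∈ ζ := by
    intro x hx y hy hadj
    have : y ∈ cobStep D z ζ := mem_cobStep_of_adj D z hx hy hadj
    rwa [hζ, ← cobBall_succ, hstab] at this
  -- the restriction of z to ζ is a cocycle
  set u := z.filter (fun x => x ∈ ζ) with hu
  set v := z.filter (fun x => ¬ x ∈ ζ) with hv
  have huv : u + v = z := Finsupp.filter_pos_add_filter_neg z _
  have hDsum : D u + D v = 0 := by rw [← map_add, huv, hz]
  have husupport : ∀ t ∈ (D u).support, ∃ x, x ∈ ζ ∧ x ∈ z.support ∧ t ∈ cobNbhd D z x := by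
    intro t ht
    obtain ⟨x, hx, htx⟩ := Finset.mem_biUnion.1 (support_D_subset D u ht)
    rw [hu, Finsupp.support_filter, Finset.mem_filter] at hx
    have hux : u x = z x := Finsupp.filter_apply_pos _ _ hx.2
    rw [hux] at htx
    exact ⟨x, hx.2, hx.1, htx⟩
  have hvsupport : ∀ t ∈ (D v).support, ∃ y, ¬ y ∈ ζ ∧ y ∈ z.support ∧ t ∈ cobNbhd D z y := by
    intro t ht
    obtain ⟨y, hy, hty⟩ := Finset.mem_biUnion.1 (support_D_subset D v ht)
    rw [hv, Finsupp.support_filter, Finset.mem_filter] at hy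
    have hvy : v y = z y := Finsupp.filter_apply_pos _ _ hy.2
    rw [hvy] at hty
    exact ⟨y, hy.2, hy.1, hty⟩
  have hDu : D u = 0 := by
    by_contra hDu
    obtain ⟨t, ht⟩ := Finsupp.support_nonempty_iff.2 hDu
    have htv : t ∈ (D v).support := by
      rw [Finsupp.mem_support_iff] at ht ⊢
      intro h0
      apply ht
      have := DFunLike.congr_fun hDsum t
      simpa [h0] using this
    obtain ⟨x, hxζ, hxA, htx⟩ := husupport t ht
    obtain ⟨y, hyζ, hyA, hty⟩ := hvsupport t htv
    exact hyζ (hclosed x hxζ y hyA ⟨t, Finset.mem_inter.2 ⟨htx, hty⟩⟩)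
  have hDv : D v = 0 := by
    have := hDsum
    rw [hDu, zero_add] at this
    exact this
  -- minimality comparison
  have hcard := hmin v hDv
  set W := (c - z).support with hW
  set W' := (c - v).support with hW'
  -- pointwise values
  have hval1 : ∀ x, ¬ x ∈ ζ → (c - v) x = (c - z) x := by
    intro x hx
    have : v x = z x := Finsupp.filter_apply_pos _ _ hx
    simp [Finsupp.sub_apply, this]
  have hval2 : ∀ x, x ∈ ζ → (c - v) x = c x := by
    intro x hx
    have : v x = 0 := Finsupp.filter_apply_neg _ _ (by simpa using hx)
    simp [Finsupp.sub_apply, this]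
  have eq1 : W'.filter (fun x => ¬ x ∈ ζ) = W.filter (fun x => ¬ x ∈ ζ) := by
    ext x
    simp only [Finset.mem_filter, hW, hW', Finsupp.mem_support_iff]
    constructor
    · rintro ⟨h1, h2⟩
      exact ⟨by rwa [hval1 x h2] at h1, h2⟩
    · rintro ⟨h1, h2⟩
      exact ⟨by rwa [hval1 x h2], h2⟩
  have eq2 : W'.filter (fun x => x ∈ ζ) = c.support.filter (fun x => x ∈ ζ) := by
    ext x
    simp only [Finset.mem_filter, hW', Finsupp.mem_support_iff]
    constructor
    · rintro ⟨h1, h2⟩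
      exact ⟨by rwa [hval2 x h2] at h1, h2⟩
    · rintro ⟨h1, h2⟩
      exact ⟨by rwa [hval2 x h2], h2⟩
  have hsplitW := Finset.card_filter_add_card_filter_not
    (s := W) (p := fun x => x ∈ ζ)
  have hsplitW' := Finset.card_filter_add_card_filter_not
    (s := W') (p := fun x => x ∈ ζ)
  have hkey : (W.filter (fun x => x ∈ ζ)).card ≤ (c.support.filter (fun x => x ∈ ζ)).card := by
    rw [eq1] at hsplitW'
    rw [eq2] at hsplitW'
    omega
  -- supp c meets ζ
  have hmeet : ∃ x, x ∈ cobBall D z s N ∧ x ∈ c.support := by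
    by_contra h
    push_neg at h
    have hempty : c.support.filter (fun x => x ∈ ζ) = ∅ := by
      rw [Finset.filter_eq_empty_iff]
      intro x hx hxζ
      exact h x hxζ hx
    have hWempty : W.filter (fun x => x ∈ ζ) = ∅ := by
      have := hkey
      rw [hempty] at this
      simpa [Finset.card_eq_zero] using this
    have hsW : s ∈ W.filter (fun x => x ∈ ζ) := by
      rw [Finset.mem_filter]
      refine ⟨?_, hsζ⟩
      rw [hW, Finsupp.mem_support_iff, Finsupp.sub_apply]
      have hcs : c s = 0 := by
        by_contra hcs
        exact (h s hsζ) (Finsupp.mem_support_iff.2 hcs)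
      rw [hcs, zero_sub, neg_ne_zero]
      exact Finsupp.mem_support_iff.1 hs
    rw [hWempty] at hsW
    exact absurd hsW (Finset.notMem_empty s)
  -- the minimal radius reaching supp c
  have hP : ∃ k : ℕ, ∃ x, x ∈ cobBall D z s k ∧ x ∈ c.support := ⟨N, hmeet⟩
  set m := Nat.find hP with hm
  have hmspec := Nat.find_spec hP
  have hmmin : ∀ r < m, ¬ ∃ x, x ∈ cobBall D z s r ∧ x ∈ c.support := fun r hr =>
    Nat.find_min hP hr
  have hmN : m ≤ N := Nat.find_min' hP hmeet
  -- m ≤ |W|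
  have hmW : m ≤ W.card := by
    rcases Nat.eq_zero_or_pos m with h0 | hpos
    · omega
    obtain ⟨r, hr⟩ : ∃ r, m = r + 1 := ⟨m - 1, by omega⟩
    have hgrow : ∀ j < m, cobBall D z s (j + 1) ≠ cobBall D z s j := by
      intro j hj heq
      obtain ⟨x, hx, hxc⟩ := hmspec
      have : cobBall D z s m = cobBall D z s j := cobBall_stab' D z s j m (by omega) heq
      exact hmmin j hj ⟨x, by rwa [← this], hxc⟩
    have hcardr : r + 1 ≤ (cobBall D z s r).card :=
      grow_card D z s r (fun j hj => hgrow j (by omega)) r le_rfl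
    have hsub : cobBall D z s r ⊆ W := by
      intro x hx
      have hxA : x ∈ z.support := cobBall_subset_support D z s hs r hx
      have hxc : c x = 0 := by
        by_contra hxc
        exact hmmin r (by omega) ⟨x, hx, Finsupp.mem_support_iff.2 hxc⟩
      rw [hW, Finsupp.mem_support_iff, Finsupp.sub_apply, hxc, zero_sub, neg_ne_zero]
      exact Finsupp.mem_support_iff.1 hxA
    have := Finset.card_le_card hsub
    omega
  -- conclude
  obtain ⟨s', hs'ball, hs'c⟩ := hmspec
  refine ⟨s', hs'c, ?_⟩
  obtain ⟨j, hjm, p, hpA, hp0, hpl, hadj⟩ := cobBall_path D z s hs m s' hs'ball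
  have hchain : HasCobChain D Set.univ j s s' := hasCobChain_of_path D z s p hpA hp0 hpl hadj
  have h1 : cobDist D s s' ≤ (j : ℕ∞) := sInf_le ⟨j, rfl, hchain⟩
  refine h1.trans ?_
  exact_mod_cast (by omega : j ≤ W.card)
end

section
/- Let 𝒜 be a nontrivial abelian group, V a type, and G a simple graph on V. Define the boundary operator ∂ sending a finitely supported function q : V × V →₀ 𝒜 to the finitely supported function ∂q : V →₀ 𝒜 with (∂q)(v) = Σ_u q(u, v) − Σ_w q(v, w). Suppose q : V × V →₀ 𝒜 is supported on adjacent pairs (i.e. G.Adj u v for every (u, v) in supp q), and suppose ∂q = Finsupp.single y a − Finsupp.single x a for some a ≠ 0 and x ≠ y. Then x and y are reachable from each other in G, and the Hamming norm of q (the cardinality of its support) is at least the graph distance G.dist x y. -/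
/-- The boundary of a `1`-chain `q : V × V →₀ 𝒜`: the `0`-chain whose value at `v` is
`Σ_u q(u, v) − Σ_w q(v, w)`. -/
noncomputable def graphBoundary {𝒜 V : Type*} [AddCommGroup 𝒜] (q : V × V →₀ 𝒜) :
    V →₀ 𝒜 :=
  q.sum fun p a => Finsupp.single p.2 a - Finsupp.single p.1 a

/-!
The vertices reachable from `x` through the support of `q` form a set closed under the
elementary chains of `q`, and the total boundary of `q` over any such set vanishes. Since the
total of `single y a - single x a` over a set containing `x` but not `y` is `-a ≠ 0`, the vertex
`y` is reachable from `x` in the graph spanned by the support. A shortest path there is a trail,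
and distinct edges on it come from distinct elements of the support.
-/

open Finset SimpleGraph

section

variable {𝒜 V : Type*} [AddCommGroup 𝒜]

theorem sum_graphBoundary_eq_zero {q : V × V →₀ 𝒜} {F : Finset V}
    (hF : ∀ p ∈ q.support, p.1 ∈ F ↔ p.2 ∈ F) : ∑ v ∈ F, graphBoundary q v = 0 := by
  classical
  simp only [graphBoundary, Finsupp.sum, Finsupp.finsetSum_apply]
  rw [Finset.sum_comm]
  refine Finset.sum_eq_zero fun p hp => ?_
  simp only [Finsupp.sub_apply, Finsupp.single_apply, Finset.sum_sub_distrib, Finset.sum_ite_eq,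
    hF p hp, sub_self]

def supportGraph (q : V × V →₀ 𝒜) : SimpleGraph V :=
  fromEdgeSet ((fun p : V × V => s(p.1, p.2)) '' q.support)

theorem supportGraph_le {q : V × V →₀ 𝒜} {G : SimpleGraph V}
    (hadj : ∀ p ∈ q.support, G.Adj p.1 p.2) : supportGraph q ≤ G := by
  rw [supportGraph, fromEdgeSet_le]
  rintro _ ⟨⟨p, hp, rfl⟩, -⟩
  exact hadj p hp

theorem reachable_supportGraph_of_mem_support {q : V × V →₀ 𝒜} {p : V × V}
    (hp : p ∈ q.support) : (supportGraph q).Reachable p.1 p.2 := by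
  by_cases h : p.1 = p.2
  · exact h ▸ Reachable.refl _
  · exact Adj.reachable ((fromEdgeSet_adj _).2 ⟨⟨p, hp, rfl⟩, h⟩)

theorem reachable_supportGraph_of_graphBoundary_eq {q : V × V →₀ 𝒜} {x y : V} {a : 𝒜}
    (ha : a ≠ 0) (hbd : graphBoundary q = Finsupp.single y a - Finsupp.single x a) :
    (supportGraph q).Reachable x y := by
  classical
  by_contra hxy
  let F := (insert x (q.support.biUnion fun p => {p.1, p.2})).filter ((supportGraph q).Reachable x)
  have hclosed : ∀ p ∈ q.support, p.1 ∈ F ↔ p.2 ∈ F := by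
    intro p hp
    have hp' := reachable_supportGraph_of_mem_support hp
    simp only [F, mem_filter, mem_insert, mem_biUnion]
    exact ⟨fun h => ⟨Or.inr ⟨p, hp, by simp⟩, h.2.trans hp'⟩,
      fun h => ⟨Or.inr ⟨p, hp, by simp⟩, h.2.trans hp'.symm⟩⟩
  have hx : x ∈ F := mem_filter.2 ⟨mem_insert_self _ _, .rfl⟩
  have hy : y ∉ F := fun h => hxy (mem_filter.1 h).2
  have hsum := sum_graphBoundary_eq_zero hclosed
  simp only [hbd, Finsupp.sub_apply, Finsupp.single_apply, sum_sub_distrib, sum_ite_eq, hx, hy,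
    if_true, if_false, zero_sub, neg_eq_zero] at hsum
  exact ha hsum

theorem SimpleGraph.Walk.IsTrail.length_le_card_support {q : V × V →₀ 𝒜} {u v : V}
    {w : (supportGraph q).Walk u v} (hw : w.IsTrail) : w.length ≤ #q.support := by
  classical
  have hedges : w.edges.toFinset ⊆ q.support.image fun p : V × V => s(p.1, p.2) := by
    intro e he
    have he' := w.edges_subset_edgeSet (List.mem_toFinset.1 he)
    rw [supportGraph, edgeSet_fromEdgeSet] at he'
    obtain ⟨⟨p, hp, rfl⟩, -⟩ := he'
    exact mem_image_of_mem _ hp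
  calc w.length = #w.edges.toFinset := by
        rw [List.toFinset_card_of_nodup hw.edges_nodup, Walk.length_edges]
    _ ≤ #(q.support.image fun p : V × V => s(p.1, p.2)) := card_le_card hedges
    _ ≤ #q.support := card_image_le

theorem dist_supportGraph_le_card_support (q : V × V →₀ 𝒜) (u v : V) :
    (supportGraph q).dist u v ≤ #q.support := by
  by_cases h : (supportGraph q).Reachable u v
  · obtain ⟨w, hw, hlen⟩ := h.exists_path_of_dist
    exact hlen ▸ hw.isTrail.length_le_card_support
  · simp [dist_eq_zero_of_not_reachable h]

end

theorem dist_le_hamming_norm_of_boundary_general {𝒜 V : Type*} [AddCommGroup 𝒜]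
    (G : SimpleGraph V) (q : V × V →₀ 𝒜)
    (hadj : ∀ p ∈ q.support, G.Adj p.1 p.2)
    (x y : V) (a : 𝒜) (ha : a ≠ 0)
    (hbd : graphBoundary q = Finsupp.single y a - Finsupp.single x a) :
    G.Reachable x y ∧ G.dist x y ≤ q.support.card := by
  have hle := supportGraph_le hadj
  have hreach := reachable_supportGraph_of_graphBoundary_eq ha hbd
  exact ⟨hreach.mono hle,
    (hreach.dist_anti hle).trans (dist_supportGraph_le_card_support q x y)⟩

/-- If a `1`-chain `q` supported on adjacent pairs of a simple graph `G` has boundary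
`single y a − single x a` with `a ≠ 0` and `x ≠ y`, then `x` and `y` are reachable from
each other in `G` and the Hamming norm of `q` is at least the graph distance `G.dist x y`. -/
theorem dist_le_hamming_norm_of_boundary {𝒜 V : Type*} [AddCommGroup 𝒜] [Nontrivial 𝒜]
    (G : SimpleGraph V) (q : V × V →₀ 𝒜)
    (hadj : ∀ p ∈ q.support, G.Adj p.1 p.2)
    (x y : V) (a : 𝒜) (ha : a ≠ 0) (hxy : x ≠ y)
    (hbd : graphBoundary q = Finsupp.single y a - Finsupp.single x a) :
    G.Reachable x y ∧ G.dist x y ≤ q.support.card :=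
  dist_le_hamming_norm_of_boundary_general G q hadj x y a ha hbd
end
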